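/- arXiv:1708.05530 — 8 statements merged into one kernel-verified Lean document; each statement's English description precedes it below -/
import Mathlib

section
/- Let P(x) = x^4 + a3 x^3 + a2 x^2 + a1 x + a0 be a real polynomial with a3 > 0, a2 < 0, a1 > 0, a0 > 0, having two distinct positive real roots u and v. Then P(-(u+v)/2) < 0. -/
theorem stmt_1 (a3 a2 a1 a0 : ℝ) (P : ℝ → ℝ)
    (hP : ∀ x, P x = x^4 + a3*x^3 + a2*x^2 + a1*x + a0)
    (h3 : a3 > 0) (h2 : a2 < 0) (h1 : a1 > 0) (h0 : a0 > 0)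
    (u v : ℝ) (hu : 0 < u) (hv : 0 < v) (huv : u ≠ v)
    (hPu : P u = 0) (hPv : P v = 0) :
    P (-(u+v)/2) < 0 := by
  have hPu' : u^4 + a3*u^3 + a2*u^2 + a1*u + a0 = 0 := by rw [← hP]; exact hPu
  have hPv' : v^4 + a3*v^3 + a2*v^2 + a1*v + a0 = 0 := by rw [← hP]; exact hPv
  have key : u*v * P ((u+v)/2)
      = -(((u-v)/2)^2) * (u*v*((u+v)/2)^2 + u*v*(a3+u+v)*((u+v)/2) + a0) := by
    rw [hP]
    linear_combination (v*(u+v)/4) * hPu' + (u*(u+v)/4) * hPv'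
  have hd : 0 < ((u-v)/2)^2 := by
    have : u - v ≠ 0 := sub_ne_zero.mpr huv
    positivity
  have hbr : 0 < u*v*((u+v)/2)^2 + u*v*(a3+u+v)*((u+v)/2) + a0 := by positivity
  have hPm : P ((u+v)/2) < 0 := by
    have h' : u*v * P ((u+v)/2) < 0 := by
      rw [key]; exact mul_neg_of_neg_of_pos (by linarith) hbr
    nlinarith [mul_pos hu hv]
  have hrel : P (-(u+v)/2) = P ((u+v)/2) - 2*a3*((u+v)/2)^3 - 2*a1*((u+v)/2) := by
    rw [hP, hP]; ring
  have hm : 0 < (u+v)/2 := by linarith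
  nlinarith [mul_pos h3 (pow_pos hm 3), mul_pos h1 hm]
end

section
/- Let V be a real polynomial of degree d ≥ 2 all of whose roots are real and nonzero. If the coefficient of x^k in V vanishes for some 1 ≤ k ≤ d-1, then the coefficients of x^{k-1} and x^{k+1} are nonzero and have opposite signs. -/
/-!
For a real-rooted polynomial `p` the Laguerre form `p'² - p p''` is positive wherever `p` does not
vanish: the identity `L((X - r) g) = g² + (X - r)² L(g)` gives it by induction on the roots.
Real-rootedness passes to derivatives (Rolle), and evaluating the Laguerre form of the `k`-th
derivative of `V = ∑ aᵢ Xⁱ` at `0` gives the Newton-type inequality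
`(k + 2) aₖ aₖ₊₂ < (k + 1) aₖ₊₁²` whenever `aₖ ≠ 0`. With `aₖ₊₁ = 0` this forces `aₖ aₖ₊₂ < 0`;
and two consecutive vanishing coefficients would propagate down to `a₀ = 0`.
-/

open Polynomial Nat

namespace Polynomial

theorem natDegree_iterate_derivative_eq {R : Type*} [Semiring R] [IsAddTorsionFree R]
    (p : R[X]) (k : ℕ) : (derivative^[k] p).natDegree = p.natDegree - k := by
  induction k with
  | zero => rfl
  | succ k ih => rw [Function.iterate_succ_apply', natDegree_derivative, ih, Nat.sub_sub]

theorem coeff_zero_iterate_derivative {R : Type*} [Semiring R] (p : R[X]) (k : ℕ) :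
    (derivative^[k] p).coeff 0 = k ! • p.coeff k := by
  rw [coeff_iterate_derivative, zero_add, Nat.descFactorial_self]

theorem Splits.derivative_of_real {p : ℝ[X]} (hp : p.Splits) : (derivative p).Splits := by
  rw [splits_iff_card_roots] at hp ⊢
  have h₁ := card_roots_le_derivative p
  have h₂ := card_roots' (derivative p)
  rw [natDegree_derivative] at h₂ ⊢
  omega

theorem Splits.iterate_derivative_of_real {p : ℝ[X]} (hp : p.Splits) (k : ℕ) :
    (derivative^[k] p).Splits := by
  induction k with
  | zero => exact hp
  | succ k ih => rw [Function.iterate_succ_apply']; exact ih.derivative_of_real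

section Laguerre

variable {R : Type*} [CommRing R]

noncomputable def laguerre (p : R[X]) : R[X] :=
  derivative p ^ 2 - p * derivative (derivative p)

theorem laguerre_X_sub_C_mul (r : R) (g : R[X]) :
    laguerre ((X - C r) * g) = g ^ 2 + (X - C r) ^ 2 * laguerre g := by
  simp only [laguerre, derivative_mul, derivative_add, derivative_sub, derivative_X,
    derivative_C, derivative_one, derivative_zero]
  ring

theorem laguerre_C_mul (a : R) (g : R[X]) : laguerre (C a * g) = C a ^ 2 * laguerre g := by
  simp only [laguerre, derivative_C_mul]
  ring

end Laguerre

theorem eval_laguerre_prod_X_sub_C_nonneg (s : Multiset ℝ) (x : ℝ) :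
    0 ≤ (laguerre (s.map fun r => X - C r).prod).eval x := by
  induction s using Multiset.induction with
  | empty => simp [laguerre]
  | cons r s ih =>
    rw [Multiset.map_cons, Multiset.prod_cons, laguerre_X_sub_C_mul]
    simp only [eval_add, eval_mul, eval_pow, eval_sub, eval_X, eval_C]
    positivity

theorem eval_laguerre_prod_X_sub_C_pos {s : Multiset ℝ} (hs : s ≠ 0) {x : ℝ} (hx : x ∉ s) :
    0 < (laguerre (s.map fun r => X - C r).prod).eval x := by
  obtain ⟨r, hr⟩ := Multiset.exists_mem_of_ne_zero hs
  obtain ⟨t, rfl⟩ := Multiset.exists_cons_of_mem hr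
  rw [Multiset.map_cons, Multiset.prod_cons, laguerre_X_sub_C_mul]
  have hgx : (t.map fun r => X - C r).prod.eval x ≠ 0 := by
    simpa [eval_multiset_prod, Multiset.prod_eq_zero_iff, sub_eq_zero] using
      fun h => hx (Multiset.mem_cons_of_mem h)
  simp only [eval_add, eval_mul, eval_pow, eval_sub, eval_X, eval_C]
  have := eval_laguerre_prod_X_sub_C_nonneg t x
  positivity

theorem Splits.eval_laguerre_pos {p : ℝ[X]} (hp : p.Splits) (hdeg : p.natDegree ≠ 0) {x : ℝ}
    (hx : p.eval x ≠ 0) : 0 < (laguerre p).eval x := by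
  have hlc : p.leadingCoeff ≠ 0 := by
    rw [Ne, leadingCoeff_eq_zero]; rintro rfl; exact hdeg natDegree_zero
  have hroot : x ∉ p.roots := fun h => hx (isRoot_of_mem_roots h)
  rw [hp.eq_prod_roots, laguerre_C_mul, eval_mul, eval_pow, eval_C]
  exact mul_pos (sq_pos_of_ne_zero hlc)
    (eval_laguerre_prod_X_sub_C_pos (hp.roots_ne_zero hdeg) hroot)

theorem Splits.mul_coeff_mul_coeff_lt_mul_coeff_sq {V : ℝ[X]} (hV : V.Splits) {k : ℕ}
    (hk : k < V.natDegree) (h : V.coeff k ≠ 0) :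
    (k + 2) * (V.coeff k * V.coeff (k + 2)) < (k + 1) * V.coeff (k + 1) ^ 2 := by
  have hdeg : (derivative^[k] V).natDegree ≠ 0 := by
    rw [natDegree_iterate_derivative_eq]; omega
  have heval : (derivative^[k] V).eval 0 ≠ 0 := by
    rw [← coeff_zero_eq_eval_zero, coeff_zero_iterate_derivative, nsmul_eq_mul]
    exact mul_ne_zero (Nat.cast_ne_zero.2 (factorial_ne_zero k)) h
  have hpos := (hV.iterate_derivative_of_real k).eval_laguerre_pos hdeg heval
  rw [laguerre, ← Function.iterate_succ_apply' derivative,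
    ← Function.iterate_succ_apply' derivative] at hpos
  simp only [eval_sub, eval_pow, eval_mul, ← coeff_zero_eq_eval_zero,
    coeff_zero_iterate_derivative, nsmul_eq_mul, factorial_succ, Nat.cast_mul] at hpos
  have hfac : (0 : ℝ) < k ! ^ 2 * (k + 1) := by positivity
  have hmul : 0 < k ! ^ 2 * (k + 1) *
      ((k + 1) * V.coeff (k + 1) ^ 2 - (k + 2) * (V.coeff k * V.coeff (k + 2))) := by
    convert hpos using 1; push_cast; ring
  exact sub_pos.1 (pos_of_mul_pos_right hmul hfac.le)

theorem Splits.coeff_ne_zero_of_coeff_succ_eq_zero {V : ℝ[X]} (hV : V.Splits)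
    (h0 : V.coeff 0 ≠ 0) {j : ℕ} (hj : j < V.natDegree) (hsucc : V.coeff (j + 1) = 0) :
    V.coeff j ≠ 0 := by
  induction j with
  | zero => exact h0
  | succ j ih =>
    intro hj0
    have hnewton := hV.mul_coeff_mul_coeff_lt_mul_coeff_sq (by omega) (ih (by omega) hj0)
    rw [hj0, hsucc] at hnewton
    simp at hnewton

end Polynomial

theorem stmt_3_general (V : Polynomial ℝ)
    (hhyp : (V.roots.card : ℕ) = V.natDegree) (h0 : V.eval 0 ≠ 0)
    (k : ℕ) (hk1 : 1 ≤ k) (hk2 : k ≤ V.natDegree - 1) (hzero : V.coeff k = 0) :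
    V.coeff (k-1) ≠ 0 ∧ V.coeff (k+1) ≠ 0 ∧ V.coeff (k-1) * V.coeff (k+1) < 0 := by
  have hV : V.Splits := splits_iff_card_roots.2 hhyp
  obtain ⟨j, rfl⟩ : ∃ j, k = j + 1 := ⟨k - 1, by omega⟩
  have hj : V.coeff j ≠ 0 :=
    hV.coeff_ne_zero_of_coeff_succ_eq_zero (coeff_zero_eq_eval_zero V ▸ h0) (by omega) hzero
  have hnewton := hV.mul_coeff_mul_coeff_lt_mul_coeff_sq (by omega) hj
  rw [hzero] at hnewton
  have hneg : V.coeff j * V.coeff (j + 2) < 0 := by nlinarith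
  simp only [Nat.add_sub_cancel]
  exact ⟨hj, right_ne_zero_of_mul hneg.ne, hneg⟩

theorem stmt_3 (V : Polynomial ℝ) (hd : 2 ≤ V.natDegree)
    (hhyp : (V.roots.card : ℕ) = V.natDegree) (h0 : V.eval 0 ≠ 0)
    (k : ℕ) (hk1 : 1 ≤ k) (hk2 : k ≤ V.natDegree - 1) (hzero : V.coeff k = 0) :
    V.coeff (k-1) ≠ 0 ∧ V.coeff (k+1) ≠ 0 ∧ V.coeff (k-1) * V.coeff (k+1) < 0 :=
  stmt_3_general V hhyp h0 k hk1 hk2 hzero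
end

section
/- There is no monic real polynomial P of degree 11 such that: the signs of the coefficients of P follow the pattern (+,-,-,-,-,-,+,+,+,+,+,-), i.e., the coefficient of x^11 is +, the coefficients of x^10 through x^6 are negative, the coefficients of x^5 through x^1 are positive, and the constant term is negative; P has exactly one simple positive root and negative roots of total multiplicity 8; and P has one pair of complex conjugate roots whose real part is ≤ 0. -/
set_option maxHeartbeats 1000000


open Polynomial

/-- Coefficients of a product of linear factors with negative roots:
nonnegativity, positivity up to the degree, and the TP₂ (Newton-type) inequalities. -/
lemma prodA_facts : ∀ (N : Multiset ℝ), (∀ ρ ∈ N, ρ < 0) →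
    (∀ k, 0 ≤ ((N.map (fun ρ => X - C ρ)).prod).coeff k) ∧
    (∀ k, k ≤ Multiset.card N → 0 < ((N.map (fun ρ => X - C ρ)).prod).coeff k) ∧
    (∀ i j, i ≤ j →
      ((N.map (fun ρ => X - C ρ)).prod).coeff i * ((N.map (fun ρ => X - C ρ)).prod).coeff (j+2) ≤
      ((N.map (fun ρ => X - C ρ)).prod).coeff (i+1) * ((N.map (fun ρ => X - C ρ)).prod).coeff (j+1)) := by
  intro N
  induction N using Multiset.induction_on with
  | empty =>
    intro _
    refine ⟨?_, ?_, ?_⟩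
    · intro k
      simp only [Multiset.map_zero, Multiset.prod_zero, coeff_one]
      split_ifs <;> norm_num
    · intro k hk
      simp only [Multiset.card_zero, Nat.le_zero] at hk
      subst hk
      simp
    · intro i j hij
      simp only [Multiset.map_zero, Multiset.prod_zero, coeff_one]
      split_ifs <;> simp_all
  | cons ρ N ih =>
    intro hall
    have hρ : ρ < 0 := hall ρ (Multiset.mem_cons_self _ _)
    obtain ⟨h0, hpos, hTP⟩ := ih (fun x hx => hall x (Multiset.mem_cons_of_mem hx))
    set A : ℝ[X] := (N.map (fun ρ => X - C ρ)).prod with hA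
    have hprod : ((ρ ::ₘ N).map (fun ρ => X - C ρ)).prod = (X - C ρ) * A := by
      rw [Multiset.map_cons, Multiset.prod_cons]
    rw [hprod]
    have hc0 : ((X - C ρ) * A).coeff 0 = -ρ * A.coeff 0 := by
      simp [mul_coeff_zero]
    have hcs : ∀ n, ((X - C ρ) * A).coeff (n+1) = A.coeff n - ρ * A.coeff (n+1) := by
      intro n
      rw [sub_mul, coeff_sub, coeff_X_mul, coeff_C_mul]
    refine ⟨?_, ?_, ?_⟩
    · intro k
      cases k with
      | zero =>
        rw [hc0]
        have := h0 0
        nlinarith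
      | succ n =>
        rw [hcs n]
        have := h0 n
        have := h0 (n+1)
        nlinarith
    · intro k hk
      rw [Multiset.card_cons] at hk
      cases k with
      | zero =>
        rw [hc0]
        have := hpos 0 (Nat.zero_le _)
        nlinarith
      | succ n =>
        rw [hcs n]
        have h1 := hpos n (by omega)
        have h2 := h0 (n+1)
        nlinarith
    · intro i j hij
      cases i with
      | zero =>
        rw [hc0, hcs (j+1), hcs 0, hcs j]
        have t2 := hTP 0 j (Nat.zero_le _)
        have n1 := h0 0
        have n2 := h0 1
        have n3 := h0 j
        have n4 := h0 (j+1)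
        have n5 := h0 (j+2)
        nlinarith [mul_le_mul_of_nonneg_left t2 (mul_self_nonneg ρ),
          mul_nonneg n1 n3, mul_nonneg (mul_nonneg (neg_nonneg.2 hρ.le) n2) n3,
          mul_nonneg n1 n4, mul_nonneg n2 n4, mul_nonneg n1 n5]
      | succ i' =>
        -- i = i'+1 ≤ j, so j = j'+1
        cases j with
        | zero => omega
        | succ j' =>
          have hij' : i' ≤ j' := by omega
          rw [hcs i', hcs (j'+2), hcs (i'+1), hcs (j'+1)]
          have t1 := hTP i' j' hij'
          have t3 := hTP (i'+1) (j'+1) (by omega)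
          have m1 := hTP i' (j'+1) (by omega)
          have m2 : A.coeff (i'+1) * A.coeff (j'+2) ≤ A.coeff (i'+2) * A.coeff (j'+1) := by
            rcases eq_or_lt_of_le hij' with h | h
            · subst h; exact le_of_eq (mul_comm _ _)
            · exact hTP (i'+1) j' (by omega)
          have mid : A.coeff i' * A.coeff (j'+3) ≤ A.coeff (i'+2) * A.coeff (j'+1) :=
            le_trans m1 m2
          have hr : (0:ℝ) ≤ -ρ := by linarith
          nlinarith [mul_le_mul_of_nonneg_left mid hr,
            mul_le_mul_of_nonneg_left t3 (mul_self_nonneg ρ), t1, m1, m2]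

theorem stmt_5 :
    ¬ ∃ P : Polynomial ℝ, P.Monic ∧ P.natDegree = 11 ∧
      (∀ j, 6 ≤ j → j ≤ 10 → P.coeff j < 0) ∧
      (∀ j, 1 ≤ j → j ≤ 5 → 0 < P.coeff j) ∧
      P.coeff 0 < 0 ∧
      (P.roots.filter (fun x => 0 < x)).card = 1 ∧
      (P.roots.filter (fun x => x < 0)).card = 8 ∧
      ∃ z : ℂ, z.im ≠ 0 ∧ z.re ≤ 0 ∧ aeval z P = 0 := by
  rintro ⟨P, hM, hdeg, hneg, hpos5, h0, hcard1, hcard8, z, hzim, hzre, hzroot⟩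
  have hP0 : P ≠ 0 := hM.ne_zero
  set β1 : ℝ := -(2 * z.re) with hβ1def
  set β0 : ℝ := Complex.normSq z with hβ0def
  have hβ1 : 0 ≤ β1 := by rw [hβ1def]; linarith
  have hβ0 : 0 < β0 := Complex.normSq_pos.mpr (fun h => hzim (by simp [h]))
  set q : ℝ[X] := X ^ 2 + C β1 * X + C β0 with hqdef
  have hqeq : q = C 1 * X ^ 2 + C β1 * X + C β0 := by rw [hqdef]; simp
  have hq2 : q.natDegree = 2 := by rw [hqeq]; exact natDegree_quadratic one_ne_zero
  have hq0 : q ≠ 0 := by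
    intro h
    have := natDegree_zero (R := ℝ)
    rw [h] at hq2; simp at hq2
  -- q divides P
  have hqdvd : q ∣ P := by
    have f := algebraMap ℝ ℂ
    rw [← map_dvd_map' (algebraMap ℝ ℂ)]
    have hconj : z ≠ (starRingEnd ℂ) z := by
      intro h
      exact hzim (Complex.conj_eq_iff_im.mp h.symm)
    have hmapq : q.map (algebraMap ℝ ℂ) = (X - C z) * (X - C ((starRingEnd ℂ) z)) := by
      have e1 : ((β1 : ℝ) : ℂ) = -(z + (starRingEnd ℂ) z) := by
        rw [Complex.add_conj, hβ1def]; push_cast; ring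
      have e2 : ((β0 : ℝ) : ℂ) = z * (starRingEnd ℂ) z := (Complex.mul_conj z).symm
      rw [hqdef]
      simp only [Polynomial.map_add, Polynomial.map_mul, Polynomial.map_pow, map_X, map_C,
        Complex.coe_algebraMap]
      rw [e1, e2, map_neg, map_add, map_mul]
      ring
    rw [hmapq]
    have hd1 : (X - C z) ∣ P.map (algebraMap ℝ ℂ) := by
      rw [dvd_iff_isRoot]
      show eval z (P.map (algebraMap ℝ ℂ)) = 0
      rw [eval_map, ← aeval_def, hzroot]
    have hd2 : (X - C ((starRingEnd ℂ) z)) ∣ P.map (algebraMap ℝ ℂ) := by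
      rw [dvd_iff_isRoot]
      show eval ((starRingEnd ℂ) z) (P.map (algebraMap ℝ ℂ)) = 0
      rw [eval_map, ← aeval_def]
      rw [Polynomial.aeval_conj, hzroot, map_zero]
    have hco : IsCoprime (X - C z) (X - C ((starRingEnd ℂ) z)) := by
      apply isCoprime_X_sub_C_of_isUnit_sub
      apply isUnit_iff_ne_zero.mpr
      exact sub_ne_zero.mpr hconj
    exact hco.mul_dvd hd1 hd2
  obtain ⟨g, hPqg⟩ := hqdvd
  have hg0 : g ≠ 0 := by
    intro h; rw [h, mul_zero] at hPqg; exact hP0 hPqg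
  have hqM : q.Monic := by
    unfold Polynomial.Monic
    rw [leadingCoeff, hq2]
    simp [hqdef, coeff_one]
  have hgM : g.Monic := by
    have : (q * g).Monic := by rw [← hPqg]; exact hM
    exact hqM.of_mul_monic_left this
  have hgdeg : g.natDegree = 9 := by
    have := natDegree_mul hq0 hg0
    rw [← hPqg, hdeg, hq2] at this
    omega
  -- q has no real roots
  have hqroots : q.roots = 0 := by
    rw [Multiset.eq_zero_iff_forall_notMem]
    intro x hx
    have hroot : eval x q = 0 := (mem_roots hq0).mp hx
    have heval : eval x q = x ^ 2 + β1 * x + β0 := by simp [hqdef]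
    have hβ0' : β0 = z.re * z.re + z.im * z.im := by
      rw [hβ0def, Complex.normSq_apply]
    have : eval x q > 0 := by
      rw [heval, hβ0', hβ1def]
      nlinarith [sq_nonneg (x - z.re), mul_self_pos.mpr hzim]
    rw [hroot] at this
    exact lt_irrefl 0 this
  have hroots : P.roots = g.roots := by
    rw [hPqg, roots_mul (by rw [← hPqg]; exact hP0), hqroots, zero_add]
  -- decompose the roots
  set Spos := P.roots.filter (fun x => 0 < x) with hSpos
  set Sneg := P.roots.filter (fun x => x < 0) with hSneg
  have hle : Spos + Sneg ≤ P.roots := by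
    rw [Multiset.le_iff_count]
    intro a
    rw [Multiset.count_add, hSpos, hSneg, Multiset.count_filter, Multiset.count_filter]
    split_ifs with h1 h2 <;> try omega
    linarith
  have hcardle : Multiset.card P.roots ≤ 9 := by
    rw [hroots]
    calc Multiset.card g.roots ≤ g.natDegree := card_roots' g
      _ = 9 := hgdeg
  have heq : Spos + Sneg = P.roots := by
    apply Multiset.eq_of_le_of_card_le hle
    rw [Multiset.card_add]
    omega
  obtain ⟨w, hw⟩ := Multiset.card_eq_one.mp hcard1
  have hw0 : 0 < w := by
    have : w ∈ Spos := by rw [hw]; exact Multiset.mem_singleton_self w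
    exact (Multiset.mem_filter.mp this).2
  have hNneg : ∀ ρ ∈ Sneg, ρ < 0 := fun ρ hρ => (Multiset.mem_filter.mp hρ).2
  have hNcard : Multiset.card Sneg = 8 := hcard8
  -- g splits and factors
  have hgsplits : g.Splits := by
    rw [splits_iff_card_roots]
    have : Multiset.card P.roots = 9 := by
      have h1 : Multiset.card (Spos + Sneg) = 9 := by
        rw [Multiset.card_add, hw, hNcard]; simp
      rw [← heq]; exact h1
    rw [← hroots, this, hgdeg]
  have hgprod : g = (g.roots.map fun a => X - C a).prod :=
    hgsplits.eq_prod_roots_of_monic hgM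
  have hgroots : g.roots = w ::ₘ Sneg := by
    rw [← hroots, ← heq, hw, Multiset.singleton_add]
  set A : ℝ[X] := (Sneg.map (fun ρ => X - C ρ)).prod with hAdef
  have hgfact : g = (X - C w) * A := by
    rw [hgprod, hgroots, Multiset.map_cons, Multiset.prod_cons]
  set B : ℝ[X] := A * q with hBdef
  have hPB : P = (X - C w) * B := by
    rw [hPqg, hgfact, hBdef]; ring
  have hcoeff : ∀ n, P.coeff (n+1) = B.coeff n - w * B.coeff (n+1) := by
    intro n
    rw [hPB, sub_mul, coeff_sub, coeff_X_mul, coeff_C_mul]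
  have hBe : B = A * X ^ 2 + C β1 * (A * X) + C β0 * A := by
    rw [hBdef, hqdef]; ring
  have hB : ∀ m, B.coeff (m+2) = A.coeff m + β1 * A.coeff (m+1) + β0 * A.coeff (m+2) := by
    intro m
    rw [hBe, coeff_add, coeff_add, coeff_C_mul, coeff_C_mul, coeff_mul_X_pow]
    have hx : (A * X).coeff (m+2) = A.coeff (m+1) := coeff_mul_X A (m+1)
    rw [hx]
  obtain ⟨hα0, hαpos, hTP⟩ := prodA_facts Sneg hNneg
  rw [← hAdef] at hα0 hαpos hTP
  rw [hNcard] at hαpos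
  -- the four central coefficients of B
  have hb4 : B.coeff 4 = A.coeff 2 + β1 * A.coeff 3 + β0 * A.coeff 4 := hB 2
  have hb5 : B.coeff 5 = A.coeff 3 + β1 * A.coeff 4 + β0 * A.coeff 5 := hB 3
  have hb6 : B.coeff 6 = A.coeff 4 + β1 * A.coeff 5 + β0 * A.coeff 6 := hB 4
  have hb7 : B.coeff 7 = A.coeff 5 + β1 * A.coeff 6 + β0 * A.coeff 7 := hB 5
  have hb5pos : 0 < B.coeff 5 := by
    rw [hb5]
    have h1 := hαpos 3 (by omega)
    have h2 := hα0 4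
    have h3 := hα0 5
    nlinarith
  have hb7pos : 0 < B.coeff 7 := by
    rw [hb7]
    have h1 := hαpos 5 (by omega)
    have h2 := hα0 6
    have h3 := hα0 7
    nlinarith
  -- TP₂ instances
  have T1 : A.coeff 4 * A.coeff 7 ≤ A.coeff 5 * A.coeff 6 := hTP 4 5 (by omega)
  have T2 : A.coeff 3 * A.coeff 7 ≤ A.coeff 4 * A.coeff 6 := hTP 3 5 (by omega)
  have T2' : A.coeff 4 * A.coeff 6 ≤ A.coeff 5 * A.coeff 5 := hTP 4 4 (by omega)
  have T3 : A.coeff 2 * A.coeff 7 ≤ A.coeff 3 * A.coeff 6 := hTP 2 5 (by omega)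
  have T4 : A.coeff 3 * A.coeff 6 ≤ A.coeff 4 * A.coeff 5 := hTP 3 4 (by omega)
  have T5 : A.coeff 2 * A.coeff 6 ≤ A.coeff 3 * A.coeff 5 := hTP 2 4 (by omega)
  have T5' : A.coeff 3 * A.coeff 5 ≤ A.coeff 4 * A.coeff 4 := hTP 3 3 (by omega)
  have T6 : A.coeff 2 * A.coeff 5 ≤ A.coeff 3 * A.coeff 4 := hTP 2 3 (by omega)
  have main : B.coeff 4 * B.coeff 7 ≤ B.coeff 5 * B.coeff 6 := by
    rw [hb4, hb5, hb6, hb7]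
    linarith [mul_le_mul_of_nonneg_left T1 (mul_pos hβ0 hβ0).le,
      mul_le_mul_of_nonneg_left (T2.trans T2') (mul_nonneg hβ0.le hβ1),
      mul_le_mul_of_nonneg_left T3 hβ0.le,
      mul_le_mul_of_nonneg_left T4 (mul_nonneg hβ1 hβ1),
      mul_le_mul_of_nonneg_left (T5.trans T5') hβ1, T6]
  -- sign conditions
  have ha5 : 0 < P.coeff 5 := hpos5 5 (by omega) (by omega)
  have ha7 : P.coeff 7 < 0 := hneg 7 (by omega) (by omega)
  rw [hcoeff 4] at ha5
  rw [hcoeff 6] at ha7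
  -- b4 > w b5, b6 < w b7, so b4 b7 > w b5 b7 > b5 b6, contradicting main
  nlinarith [mul_lt_mul_of_pos_right (show w * B.coeff 5 < B.coeff 4 by linarith) hb7pos,
    mul_lt_mul_of_pos_left (show B.coeff 6 < w * B.coeff 7 by linarith) hb5pos]
end

section
/- There are no positive real numbers u_1, ..., u_8 and ξ > 0 such that the polynomial P(x) = (x+u_1)···(x+u_8)·(x-ξ)^3 has coefficient of x^10 equal to -1 and coefficient of x^1 positive. Equivalently: if ξ = (u_1 + ··· + u_8 + 1)/3, then the coefficient of x in (x+u_1)···(x+u_8)(x-ξ)^3 is negative. -/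
open Polynomial

private lemma cm1 (p q : ℝ[X]) :
    (p*q).coeff 1 = p.coeff 0 * q.coeff 1 + p.coeff 1 * q.coeff 0 := by
  rw [coeff_mul, Finset.Nat.sum_antidiagonal_eq_sum_range_succ_mk,
    Finset.sum_range_succ, Finset.sum_range_one]

set_option maxHeartbeats 1000000 in
private lemma coeff1_prod8 (u : Fin 8 → ℝ) :
    (∏ i, (X + C (u i)) : ℝ[X]).coeff 1 =
      (u 1)*(u 2)*(u 3)*(u 4)*(u 5)*(u 6)*(u 7)+(u 0)*(u 2)*(u 3)*(u 4)*(u 5)*(u 6)*(u 7)+(u 0)*(u 1)*(u 3)*(u 4)*(u 5)*(u 6)*(u 7)+(u 0)*(u 1)*(u 2)*(u 4)*(u 5)*(u 6)*(u 7)+(u 0)*(u 1)*(u 2)*(u 3)*(u 5)*(u 6)*(u 7)+(u 0)*(u 1)*(u 2)*(u 3)*(u 4)*(u 6)*(u 7)+(u 0)*(u 1)*(u 2)*(u 3)*(u 4)*(u 5)*(u 7)+(u 0)*(u 1)*(u 2)*(u 3)*(u 4)*(u 5)*(u 6) := by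
  rw [Fin.prod_univ_eight]
  simp only [cm1, mul_coeff_zero, coeff_add, coeff_X_zero, coeff_X_one,
    coeff_C_zero, coeff_C_succ]
  ring

private lemma coeff0_prod8 (u : Fin 8 → ℝ) :
    (∏ i, (X + C (u i)) : ℝ[X]).coeff 0 = (u 0)*(u 1)*(u 2)*(u 3)*(u 4)*(u 5)*(u 6)*(u 7) := by
  rw [Fin.prod_univ_eight]
  simp only [mul_coeff_zero, coeff_add, coeff_X_zero, coeff_C_zero]
  ring

private lemma coeffQ0 (ξ : ℝ) : ((X - C ξ)^3 : ℝ[X]).coeff 0 = -ξ^3 := by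
  rw [coeff_zero_eq_eval_zero]
  simp
  ring

private lemma coeffQ1 (ξ : ℝ) : ((X - C ξ)^3 : ℝ[X]).coeff 1 = 3*ξ^2 := by
  have h3 : ((X - C ξ)^3 : ℝ[X]) = (X - C ξ) * (X - C ξ) * (X - C ξ) := by ring
  rw [h3]
  simp only [cm1, mul_coeff_zero, coeff_sub, coeff_X_zero, coeff_X_one,
    coeff_C_zero, coeff_C_succ]
  ring

set_option maxHeartbeats 1000000 in
theorem stmt_8 :
    ¬ ∃ (u : Fin 8 → ℝ) (ξ : ℝ), (∀ i, 0 < u i) ∧ 0 < ξ ∧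
      ((∏ i, (X + C (u i))) * (X - C ξ)^3).coeff 10 = -1 ∧
      0 < ((∏ i, (X + C (u i))) * (X - C ξ)^3).coeff 1 := by
  rintro ⟨u, ξ, hu, hξ, h10, h1⟩
  have hu0 := hu 0; have hu1 := hu 1; have hu2 := hu 2; have hu3 := hu 3
  have hu4 := hu 4; have hu5 := hu 5; have hu6 := hu 6; have hu7 := hu 7
  -- coefficient 10 via nextCoeff
  have hmP : (∏ i, (X + C (u i)) : ℝ[X]).Monic :=
    monic_prod_of_monic _ _ (fun i _ => monic_X_add_C _)
  have hmQ : ((X - C ξ)^3 : ℝ[X]).Monic := (monic_X_sub_C ξ).pow 3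
  have hdP : (∏ i, (X + C (u i)) : ℝ[X]).natDegree = 8 := by
    rw [natDegree_prod_of_monic _ _ (fun i _ => monic_X_add_C _)]
    simp [natDegree_X_add_C]
  have hdQ : ((X - C ξ)^3 : ℝ[X]).natDegree = 3 := by
    simp [natDegree_pow, natDegree_X_sub_C]
  have hd : (((∏ i, (X + C (u i))) * (X - C ξ)^3 : ℝ[X])).natDegree = 11 := by
    rw [hmP.natDegree_mul hmQ, hdP, hdQ]
  have hnc : (((∏ i, (X + C (u i))) * (X - C ξ)^3 : ℝ[X])).nextCoeff
      = (((∏ i, (X + C (u i))) * (X - C ξ)^3 : ℝ[X])).coeff 10 := by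
    rw [nextCoeff_of_natDegree_pos (by rw [hd]; norm_num), hd]
  have h10' : (∏ i, (X + C (u i)) : ℝ[X]).nextCoeff + ((X - C ξ)^3 : ℝ[X]).nextCoeff = -1 := by
    rw [← hmP.nextCoeff_mul hmQ, hnc, h10]
  rw [Monic.nextCoeff_prod _ _ (fun i _ => monic_X_add_C _),
    (monic_X_sub_C ξ).nextCoeff_pow, nextCoeff_X_sub_C] at h10'
  simp only [nextCoeff_X_add_C, Fin.sum_univ_eight, nsmul_eq_mul, Nat.cast_ofNat] at h10'
  have hsum : ((u 0)+(u 1)+(u 2)+(u 3)+(u 4)+(u 5)+(u 6)+(u 7)) - 3*ξ = -1 := by linarith [h10']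
  -- coefficient 1
  rw [cm1, coeff0_prod8, coeff1_prod8, coeffQ0, coeffQ1] at h1
  -- h1 : 0 < P * (3ξ²) + E7 * (-ξ³)
  have hR : (0:ℝ) ≤ (u 1)*(u 2)*(u 2)*(u 3)*(u 4)*(u 5)*(u 6)*(u 7)+(u 1)*(u 2)*(u 3)*(u 3)*(u 4)*(u 5)*(u 6)*(u 7)+(u 1)*(u 2)*(u 3)*(u 4)*(u 4)*(u 5)*(u 6)*(u 7)+(u 1)*(u 2)*(u 3)*(u 4)*(u 5)*(u 5)*(u 6)*(u 7)+(u 1)*(u 2)*(u 3)*(u 4)*(u 5)*(u 6)*(u 6)*(u 7)+(u 1)*(u 2)*(u 3)*(u 4)*(u 5)*(u 6)*(u 7)*(u 7)+(u 0)*(u 2)*(u 2)*(u 3)*(u 4)*(u 5)*(u 6)*(u 7)+(u 0)*(u 2)*(u 3)*(u 3)*(u 4)*(u 5)*(u 6)*(u 7)+(u 0)*(u 2)*(u 3)*(u 4)*(u 4)*(u 5)*(u 6)*(u 7)+(u 0)*(u 2)*(u 3)*(u 4)*(u 5)*(u 5)*(u 6)*(u 7)+(u 0)*(u 2)*(u 3)*(u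 4)*(u 5)*(u 6)*(u 6)*(u 7)+(u 0)*(u 2)*(u 3)*(u 4)*(u 5)*(u 6)*(u 7)*(u 7)+(u 0)*(u 0)*(u 1)*(u 3)*(u 4)*(u 5)*(u 6)*(u 7)+(u 0)*(u 1)*(u 1)*(u 3)*(u 4)*(u 5)*(u 6)*(u 7)+(u 0)*(u 1)*(u 3)*(u 3)*(u 4)*(u 5)*(u 6)*(u 7)+(u 0)*(u 1)*(u 3)*(u 4)*(u 4)*(u 5)*(u 6)*(u 7)+(u 0)*(u 1)*(u 3)*(u 4)*(u 5)*(u 5)*(u 6)*(u 7)+(u 0)*(u 1)*(u 3)*(u 4)*(u 5)*(u 6)*(u 6)*(u 7)+(u 0)*(u 1)*(u 3)*(u 4)*(u 5)*(u 6)*(u 7)*(u 7)+(u 0)*(u 0)*(u 1)*(u 2)*(u 4)*(u 5)*(u 6)*(u 7)+(u 0)*(u 1)*(u 1)*(u 2)*(u 4)*(u 5)*(u 6)*(u 7)+(u 0)*(u 1)*(u 2)*(u 2)*(u 4)*(u 5)*(u 6)*(u 7)+(u 0)*(u 1)*(u 2)*(u 4)*(u 4)*(u 5)*(u 6)*(u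 7)+(u 0)*(u 1)*(u 2)*(u 4)*(u 5)*(u 5)*(u 6)*(u 7)+(u 0)*(u 1)*(u 2)*(u 4)*(u 5)*(u 6)*(u 6)*(u 7)+(u 0)*(u 1)*(u 2)*(u 4)*(u 5)*(u 6)*(u 7)*(u 7)+(u 0)*(u 0)*(u 1)*(u 2)*(u 3)*(u 5)*(u 6)*(u 7)+(u 0)*(u 1)*(u 1)*(u 2)*(u 3)*(u 5)*(u 6)*(u 7)+(u 0)*(u 1)*(u 2)*(u 2)*(u 3)*(u 5)*(u 6)*(u 7)+(u 0)*(u 1)*(u 2)*(u 3)*(u 3)*(u 5)*(u 6)*(u 7)+(u 0)*(u 1)*(u 2)*(u 3)*(u 5)*(u 5)*(u 6)*(u 7)+(u 0)*(u 1)*(u 2)*(u 3)*(u 5)*(u 6)*(u 6)*(u 7)+(u 0)*(u 1)*(u 2)*(u 3)*(u 5)*(u 6)*(u 7)*(u 7)+(u 0)*(u 0)*(u 1)*(u 2)*(u 3)*(u 4)*(u 6)*(u 7)+(u 0)*(u 1)*(u 1)*(u 2)*(u 3)*(u 4)*(u 6)*(u 7)+(u 0)*(u 1)*(u 2)*(u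 2)*(u 3)*(u 4)*(u 6)*(u 7)+(u 0)*(u 1)*(u 2)*(u 3)*(u 3)*(u 4)*(u 6)*(u 7)+(u 0)*(u 1)*(u 2)*(u 3)*(u 4)*(u 4)*(u 6)*(u 7)+(u 0)*(u 1)*(u 2)*(u 3)*(u 4)*(u 6)*(u 6)*(u 7)+(u 0)*(u 1)*(u 2)*(u 3)*(u 4)*(u 6)*(u 7)*(u 7)+(u 0)*(u 0)*(u 1)*(u 2)*(u 3)*(u 4)*(u 5)*(u 7)+(u 0)*(u 1)*(u 1)*(u 2)*(u 3)*(u 4)*(u 5)*(u 7)+(u 0)*(u 1)*(u 2)*(u 2)*(u 3)*(u 4)*(u 5)*(u 7)+(u 0)*(u 1)*(u 2)*(u 3)*(u 3)*(u 4)*(u 5)*(u 7)+(u 0)*(u 1)*(u 2)*(u 3)*(u 4)*(u 4)*(u 5)*(u 7)+(u 0)*(u 1)*(u 2)*(u 3)*(u 4)*(u 5)*(u 5)*(u 7)+(u 0)*(u 1)*(u 2)*(u 3)*(u 4)*(u 5)*(u 7)*(u 7)+(u 0)*(u 0)*(u 1)*(u 2)*(u 3)*(u 4)*(u 5)*(u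 6)+(u 0)*(u 1)*(u 1)*(u 2)*(u 3)*(u 4)*(u 5)*(u 6)+(u 0)*(u 1)*(u 2)*(u 2)*(u 3)*(u 4)*(u 5)*(u 6)+(u 0)*(u 1)*(u 2)*(u 3)*(u 3)*(u 4)*(u 5)*(u 6)+(u 0)*(u 1)*(u 2)*(u 3)*(u 4)*(u 4)*(u 5)*(u 6)+(u 0)*(u 1)*(u 2)*(u 3)*(u 4)*(u 5)*(u 5)*(u 6)+(u 0)*(u 1)*(u 2)*(u 3)*(u 4)*(u 5)*(u 6)*(u 6) := by positivity
  have hM : (0:ℝ) ≤ ((u 2)*(u 3)*(u 4)*(u 5)*(u 6)*(u 7))*((u 0)-(u 1))^2 := by positivity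
  have hE7 : (0:ℝ) < (u 1)*(u 2)*(u 3)*(u 4)*(u 5)*(u 6)*(u 7)+(u 0)*(u 2)*(u 3)*(u 4)*(u 5)*(u 6)*(u 7)+(u 0)*(u 1)*(u 3)*(u 4)*(u 5)*(u 6)*(u 7)+(u 0)*(u 1)*(u 2)*(u 4)*(u 5)*(u 6)*(u 7)+(u 0)*(u 1)*(u 2)*(u 3)*(u 5)*(u 6)*(u 7)+(u 0)*(u 1)*(u 2)*(u 3)*(u 4)*(u 6)*(u 7)+(u 0)*(u 1)*(u 2)*(u 3)*(u 4)*(u 5)*(u 7)+(u 0)*(u 1)*(u 2)*(u 3)*(u 4)*(u 5)*(u 6) := by positivity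
  have hP : (0:ℝ) < (u 0)*(u 1)*(u 2)*(u 3)*(u 4)*(u 5)*(u 6)*(u 7) := by positivity
  have key : ((u 1)*(u 2)*(u 3)*(u 4)*(u 5)*(u 6)*(u 7)+(u 0)*(u 2)*(u 3)*(u 4)*(u 5)*(u 6)*(u 7)+(u 0)*(u 1)*(u 3)*(u 4)*(u 5)*(u 6)*(u 7)+(u 0)*(u 1)*(u 2)*(u 4)*(u 5)*(u 6)*(u 7)+(u 0)*(u 1)*(u 2)*(u 3)*(u 5)*(u 6)*(u 7)+(u 0)*(u 1)*(u 2)*(u 3)*(u 4)*(u 6)*(u 7)+(u 0)*(u 1)*(u 2)*(u 3)*(u 4)*(u 5)*(u 7)+(u 0)*(u 1)*(u 2)*(u 3)*(u 4)*(u 5)*(u 6))*(((u 0)+(u 1)+(u 2)+(u 3)+(u 4)+(u 5)+(u 6)+(u 7))+1) =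
      ((u 1)*(u 2)*(u 2)*(u 3)*(u 4)*(u 5)*(u 6)*(u 7)+(u 1)*(u 2)*(u 3)*(u 3)*(u 4)*(u 5)*(u 6)*(u 7)+(u 1)*(u 2)*(u 3)*(u 4)*(u 4)*(u 5)*(u 6)*(u 7)+(u 1)*(u 2)*(u 3)*(u 4)*(u 5)*(u 5)*(u 6)*(u 7)+(u 1)*(u 2)*(u 3)*(u 4)*(u 5)*(u 6)*(u 6)*(u 7)+(u 1)*(u 2)*(u 3)*(u 4)*(u 5)*(u 6)*(u 7)*(u 7)+(u 0)*(u 2)*(u 2)*(u 3)*(u 4)*(u 5)*(u 6)*(u 7)+(u 0)*(u 2)*(u 3)*(u 3)*(u 4)*(u 5)*(u 6)*(u 7)+(u 0)*(u 2)*(u 3)*(u 4)*(u 4)*(u 5)*(u 6)*(u 7)+(u 0)*(u 2)*(u 3)*(u 4)*(u 5)*(u 5)*(u 6)*(u 7)+(u 0)*(u 2)*(u 3)*(u 4)*(u 5)*(u 6)*(u 6)*(u 7)+(u 0)*(u 2)*(u 3)*(u 4)*(u 5)*(u 6)*(u 7)*(u 7)+(u 0)*(u 0)*(u 1)*(u 3)*(u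 4)*(u 5)*(u 6)*(u 7)+(u 0)*(u 1)*(u 1)*(u 3)*(u 4)*(u 5)*(u 6)*(u 7)+(u 0)*(u 1)*(u 3)*(u 3)*(u 4)*(u 5)*(u 6)*(u 7)+(u 0)*(u 1)*(u 3)*(u 4)*(u 4)*(u 5)*(u 6)*(u 7)+(u 0)*(u 1)*(u 3)*(u 4)*(u 5)*(u 5)*(u 6)*(u 7)+(u 0)*(u 1)*(u 3)*(u 4)*(u 5)*(u 6)*(u 6)*(u 7)+(u 0)*(u 1)*(u 3)*(u 4)*(u 5)*(u 6)*(u 7)*(u 7)+(u 0)*(u 0)*(u 1)*(u 2)*(u 4)*(u 5)*(u 6)*(u 7)+(u 0)*(u 1)*(u 1)*(u 2)*(u 4)*(u 5)*(u 6)*(u 7)+(u 0)*(u 1)*(u 2)*(u 2)*(u 4)*(u 5)*(u 6)*(u 7)+(u 0)*(u 1)*(u 2)*(u 4)*(u 4)*(u 5)*(u 6)*(u 7)+(u 0)*(u 1)*(u 2)*(u 4)*(u 5)*(u 5)*(u 6)*(u 7)+(u 0)*(u 1)*(u 2)*(u 4)*(u 5)*(u 6)*(u 6)*(u 7)+(u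 0)*(u 1)*(u 2)*(u 4)*(u 5)*(u 6)*(u 7)*(u 7)+(u 0)*(u 0)*(u 1)*(u 2)*(u 3)*(u 5)*(u 6)*(u 7)+(u 0)*(u 1)*(u 1)*(u 2)*(u 3)*(u 5)*(u 6)*(u 7)+(u 0)*(u 1)*(u 2)*(u 2)*(u 3)*(u 5)*(u 6)*(u 7)+(u 0)*(u 1)*(u 2)*(u 3)*(u 3)*(u 5)*(u 6)*(u 7)+(u 0)*(u 1)*(u 2)*(u 3)*(u 5)*(u 5)*(u 6)*(u 7)+(u 0)*(u 1)*(u 2)*(u 3)*(u 5)*(u 6)*(u 6)*(u 7)+(u 0)*(u 1)*(u 2)*(u 3)*(u 5)*(u 6)*(u 7)*(u 7)+(u 0)*(u 0)*(u 1)*(u 2)*(u 3)*(u 4)*(u 6)*(u 7)+(u 0)*(u 1)*(u 1)*(u 2)*(u 3)*(u 4)*(u 6)*(u 7)+(u 0)*(u 1)*(u 2)*(u 2)*(u 3)*(u 4)*(u 6)*(u 7)+(u 0)*(u 1)*(u 2)*(u 3)*(u 3)*(u 4)*(u 6)*(u 7)+(u 0)*(u 1)*(u 2)*(u 3)*(u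 4)*(u 4)*(u 6)*(u 7)+(u 0)*(u 1)*(u 2)*(u 3)*(u 4)*(u 6)*(u 6)*(u 7)+(u 0)*(u 1)*(u 2)*(u 3)*(u 4)*(u 6)*(u 7)*(u 7)+(u 0)*(u 0)*(u 1)*(u 2)*(u 3)*(u 4)*(u 5)*(u 7)+(u 0)*(u 1)*(u 1)*(u 2)*(u 3)*(u 4)*(u 5)*(u 7)+(u 0)*(u 1)*(u 2)*(u 2)*(u 3)*(u 4)*(u 5)*(u 7)+(u 0)*(u 1)*(u 2)*(u 3)*(u 3)*(u 4)*(u 5)*(u 7)+(u 0)*(u 1)*(u 2)*(u 3)*(u 4)*(u 4)*(u 5)*(u 7)+(u 0)*(u 1)*(u 2)*(u 3)*(u 4)*(u 5)*(u 5)*(u 7)+(u 0)*(u 1)*(u 2)*(u 3)*(u 4)*(u 5)*(u 7)*(u 7)+(u 0)*(u 0)*(u 1)*(u 2)*(u 3)*(u 4)*(u 5)*(u 6)+(u 0)*(u 1)*(u 1)*(u 2)*(u 3)*(u 4)*(u 5)*(u 6)+(u 0)*(u 1)*(u 2)*(u 2)*(u 3)*(u 4)*(u 5)*(u 6)+(u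 0)*(u 1)*(u 2)*(u 3)*(u 3)*(u 4)*(u 5)*(u 6)+(u 0)*(u 1)*(u 2)*(u 3)*(u 4)*(u 4)*(u 5)*(u 6)+(u 0)*(u 1)*(u 2)*(u 3)*(u 4)*(u 5)*(u 5)*(u 6)+(u 0)*(u 1)*(u 2)*(u 3)*(u 4)*(u 5)*(u 6)*(u 6)) + ((u 1)*(u 2)*(u 3)*(u 4)*(u 5)*(u 6)*(u 7)+(u 0)*(u 2)*(u 3)*(u 4)*(u 5)*(u 6)*(u 7)+(u 0)*(u 1)*(u 3)*(u 4)*(u 5)*(u 6)*(u 7)+(u 0)*(u 1)*(u 2)*(u 4)*(u 5)*(u 6)*(u 7)+(u 0)*(u 1)*(u 2)*(u 3)*(u 5)*(u 6)*(u 7)+(u 0)*(u 1)*(u 2)*(u 3)*(u 4)*(u 6)*(u 7)+(u 0)*(u 1)*(u 2)*(u 3)*(u 4)*(u 5)*(u 7)+(u 0)*(u 1)*(u 2)*(u 3)*(u 4)*(u 5)*(u 6)) + 10*((u 0)*(u 1)*(u 2)*(u 3)*(u 4)*(u 5)*(u 6)*(u 7)) + ((u 2)*(u 3)*(u 4)*(u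 5)*(u 6)*(u 7))*((u 0)-(u 1))^2 := by ring
  have hx : 3*ξ = ((u 0)+(u 1)+(u 2)+(u 3)+(u 4)+(u 5)+(u 6)+(u 7))+1 := by linarith
  have h8 : ((u 1)*(u 2)*(u 3)*(u 4)*(u 5)*(u 6)*(u 7)+(u 0)*(u 2)*(u 3)*(u 4)*(u 5)*(u 6)*(u 7)+(u 0)*(u 1)*(u 3)*(u 4)*(u 5)*(u 6)*(u 7)+(u 0)*(u 1)*(u 2)*(u 4)*(u 5)*(u 6)*(u 7)+(u 0)*(u 1)*(u 2)*(u 3)*(u 5)*(u 6)*(u 7)+(u 0)*(u 1)*(u 2)*(u 3)*(u 4)*(u 6)*(u 7)+(u 0)*(u 1)*(u 2)*(u 3)*(u 4)*(u 5)*(u 7)+(u 0)*(u 1)*(u 2)*(u 3)*(u 4)*(u 5)*(u 6))*(3*ξ) = ((u 1)*(u 2)*(u 3)*(u 4)*(u 5)*(u 6)*(u 7)+(u 0)*(u 2)*(u 3)*(u 4)*(u 5)*(u 6)*(u 7)+(u 0)*(u 1)*(u 3)*(u 4)*(u 5)*(u 6)*(u 7)+(u 0)*(u 1)*(u 2)*(u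 4)*(u 5)*(u 6)*(u 7)+(u 0)*(u 1)*(u 2)*(u 3)*(u 5)*(u 6)*(u 7)+(u 0)*(u 1)*(u 2)*(u 3)*(u 4)*(u 6)*(u 7)+(u 0)*(u 1)*(u 2)*(u 3)*(u 4)*(u 5)*(u 7)+(u 0)*(u 1)*(u 2)*(u 3)*(u 4)*(u 5)*(u 6))*(((u 0)+(u 1)+(u 2)+(u 3)+(u 4)+(u 5)+(u 6)+(u 7))+1) := by rw [hx]
  have h9 : 10*((u 0)*(u 1)*(u 2)*(u 3)*(u 4)*(u 5)*(u 6)*(u 7)) ≤ 3*(((u 1)*(u 2)*(u 3)*(u 4)*(u 5)*(u 6)*(u 7)+(u 0)*(u 2)*(u 3)*(u 4)*(u 5)*(u 6)*(u 7)+(u 0)*(u 1)*(u 3)*(u 4)*(u 5)*(u 6)*(u 7)+(u 0)*(u 1)*(u 2)*(u 4)*(u 5)*(u 6)*(u 7)+(u 0)*(u 1)*(u 2)*(u 3)*(u 5)*(u 6)*(u 7)+(u 0)*(u 1)*(u 2)*(u 3)*(u 4)*(u 6)*(u 7)+(u 0)*(u 1)*(u 2)*(u 3)*(u 4)*(u 5)*(u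 7)+(u 0)*(u 1)*(u 2)*(u 3)*(u 4)*(u 5)*(u 6))*ξ) := by linarith [key, h8, hR, hM, hE7.le]
  have h11 : 3*((u 0)*(u 1)*(u 2)*(u 3)*(u 4)*(u 5)*(u 6)*(u 7)) - ((u 1)*(u 2)*(u 3)*(u 4)*(u 5)*(u 6)*(u 7)+(u 0)*(u 2)*(u 3)*(u 4)*(u 5)*(u 6)*(u 7)+(u 0)*(u 1)*(u 3)*(u 4)*(u 5)*(u 6)*(u 7)+(u 0)*(u 1)*(u 2)*(u 4)*(u 5)*(u 6)*(u 7)+(u 0)*(u 1)*(u 2)*(u 3)*(u 5)*(u 6)*(u 7)+(u 0)*(u 1)*(u 2)*(u 3)*(u 4)*(u 6)*(u 7)+(u 0)*(u 1)*(u 2)*(u 3)*(u 4)*(u 5)*(u 7)+(u 0)*(u 1)*(u 2)*(u 3)*(u 4)*(u 5)*(u 6))*ξ < 0 := by linarith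
  have h12 : ξ^2*(3*((u 0)*(u 1)*(u 2)*(u 3)*(u 4)*(u 5)*(u 6)*(u 7)) - ((u 1)*(u 2)*(u 3)*(u 4)*(u 5)*(u 6)*(u 7)+(u 0)*(u 2)*(u 3)*(u 4)*(u 5)*(u 6)*(u 7)+(u 0)*(u 1)*(u 3)*(u 4)*(u 5)*(u 6)*(u 7)+(u 0)*(u 1)*(u 2)*(u 4)*(u 5)*(u 6)*(u 7)+(u 0)*(u 1)*(u 2)*(u 3)*(u 5)*(u 6)*(u 7)+(u 0)*(u 1)*(u 2)*(u 3)*(u 4)*(u 6)*(u 7)+(u 0)*(u 1)*(u 2)*(u 3)*(u 4)*(u 5)*(u 7)+(u 0)*(u 1)*(u 2)*(u 3)*(u 4)*(u 5)*(u 6))*ξ) ≤ 0 :=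
    mul_nonpos_of_nonneg_of_nonpos (sq_nonneg ξ) h11.le
  linarith [h1, h12]
end

section
/- There are no real numbers s > 0, t > 0, w > 0 with t ≠ w such that the polynomial P(x) = (x+1)^7 (s x + 1) (t x - 1)^2 (w x - 1) simultaneously satisfies: coefficient of x^1 equals 0, coefficient of x^10 is negative, coefficient of x^3 is positive, coefficient of x^4 is positive, and coefficient of x^6 is nonpositive. -/
open Polynomial

private lemma expandP (s t w : ℝ) :
    (X + 1)^7 * (C s * X + 1) * (C t * X - 1)^2 * (C w * X - 1) =
    C (-1 : ℝ) +
    C (-7 + w + 2*t - s : ℝ) * X^1 +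
    C (-21 + 7*w + 14*t - 2*t*w - t^2 - 7*s + s*w + 2*s*t : ℝ) * X^2 +
    C (-35 + 21*w + 42*t - 14*t*w - 7*t^2 + t^2*w - 21*s + 7*s*w + 14*s*t - 2*s*t*w - s*t^2 : ℝ) * X^3 +
    C (-35 + 35*w + 70*t - 42*t*w - 21*t^2 + 7*t^2*w - 35*s + 21*s*w + 42*s*t - 14*s*t*w - 7*s*t^2 + s*t^2*w : ℝ) * X^4 +
    C (-21 + 35*w + 70*t - 70*t*w - 35*t^2 + 21*t^2*w - 35*s + 35*s*w + 70*s*t - 42*s*t*w - 21*s*t^2 + 7*s*t^2*w : ℝ) * X^5 +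
    C (-7 + 21*w + 42*t - 70*t*w - 35*t^2 + 35*t^2*w - 21*s + 35*s*w + 70*s*t - 70*s*t*w - 35*s*t^2 + 21*s*t^2*w : ℝ) * X^6 +
    C (-1 + 7*w + 14*t - 42*t*w - 21*t^2 + 35*t^2*w - 7*s + 21*s*w + 42*s*t - 70*s*t*w - 35*s*t^2 + 35*s*t^2*w : ℝ) * X^7 +
    C (w + 2*t - 14*t*w - 7*t^2 + 21*t^2*w - s + 7*s*w + 14*s*t - 42*s*t*w - 21*s*t^2 + 35*s*t^2*w : ℝ) * X^8 +
    C (-2*t*w - t^2 + 7*t^2*w + s*w + 2*s*t - 14*s*t*w - 7*s*t^2 + 21*s*t^2*w : ℝ) * X^9 +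
    C (t^2*w - 2*s*t*w - s*t^2 + 7*s*t^2*w : ℝ) * X^10 +
    C (s*t^2*w : ℝ) * X^11 := by
  simp only [map_add, map_mul, map_sub, map_neg, map_one, map_pow, map_ofNat]
  ring

theorem stmt_10 :
    ¬ ∃ s t w : ℝ, 0 < s ∧ 0 < t ∧ 0 < w ∧ t ≠ w ∧
      (let P := (X + 1)^7 * (C s * X + 1) * (C t * X - 1)^2 * (C w * X - 1);
       P.coeff 1 = 0 ∧ P.coeff 10 < 0 ∧ 0 < P.coeff 3 ∧ 0 < P.coeff 4 ∧
       P.coeff 6 ≤ 0) := by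
  rintro ⟨s, t, w, hs, ht, hw, htw, h⟩
  simp only [expandP s t w, coeff_add, coeff_C_mul, coeff_X_pow, coeff_C, mul_ite, mul_one,
    mul_zero] at h
  norm_num at h
  obtain ⟨h1, h10, h3, h4, h6⟩ := h
  have hseq : s = w + 2*t - 7 := by linarith
  subst hseq
  -- now hs : 0 < w + 2*t - 7
  rcases le_or_gt t (2/7) with ht2 | ht2
  · -- a6 > 0, contradiction with h6
    have hu : 0 < w * (w + 2*t - 7) := mul_pos hw hs
    have hp1 : 0 < 3*t^2 - 10*t + 5 := by nlinarith [sq_nonneg t]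
    have hp3 : 0 < 2 - 7*t + 5*t^2 - t^3 := by
      nlinarith [mul_pos (mul_pos ht ht) (show (0:ℝ) < 5 - t by linarith)]
    nlinarith [mul_pos hp1 hu, hp3, h6]
  · rcases le_or_gt t (7/2) with ht7 | ht7
    · -- a10 > 0, contradiction with h10
      have hu : 0 < w * (w + 2*t - 7) := mul_pos hw hs
      have h72 : (0:ℝ) < 7*t - 2 := by linarith
      nlinarith [mul_pos (mul_pos ht h72) hu,
        mul_nonneg (mul_nonneg ht.le ht.le) (show (0:ℝ) ≤ 7 - 2*t by linarith)]
    · -- t > 7/2 : derive w*(7t-2) < t, then a4 < 0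
      have h27 : (0:ℝ) < 2*t - 7 := by linarith
      have h72 : (0:ℝ) < 7*t - 2 := by linarith
      have k1 : (7*t-2) * (w * (w + 2*t - 7)) - t*(2*t-7) < 0 := by
        by_contra hcon
        push_neg at hcon
        nlinarith [mul_nonneg ht.le hcon, h10]
      have hb : w*(7*t-2) < t := by
        by_contra hcon
        push_neg at hcon
        nlinarith [mul_le_mul_of_nonneg_right hcon h27.le, mul_pos (mul_pos h72 hw) hw]
      have hg : 0 < t - w*(7*t-2) := by linarith
      have hh : 0 < t - 7/2 := by linarith
      have ht0 : (0:ℝ) < t := by linarith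
      nlinarith [mul_pos hg hw, mul_pos hg hh, mul_pos hg ht0, mul_pos hw hh,
        mul_pos hw ht0, mul_pos hh ht0, mul_pos hw hw, mul_pos hh hh,
        mul_pos ht0 ht0, mul_pos hg hg, hg, hh, hw, ht0, h4]
end

section
/- Let S(t,w) = 10 w t² - 2 t² + 5 w² t - 21 w t + 5 t - 2 w² + 10 w. For all real t ∈ [1/2, 2] and all real w, S(t,w) ≥ 0. -/
theorem stmt_12 (t w : ℝ) (ht1 : 1/2 ≤ t) (ht2 : t ≤ 2) :
    0 ≤ 10*w*t^2 - 2*t^2 + 5*w^2*t - 21*w*t + 5*t - 2*w^2 + 10*w := by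
  nlinarith [sq_nonneg (2*(5*t-2)*w + (10*t^2-21*t+10)), mul_nonneg (sub_nonneg.2 ht2) (sub_nonneg.2 ht1), sq_nonneg (2*t-1), sq_nonneg (t-2), mul_nonneg (mul_nonneg (sub_nonneg.2 ht2) (sub_nonneg.2 ht1)) (sq_nonneg t), sq_nonneg w, sq_nonneg (w+1)]
end

section
/- For w ∈ [4, 6.71], the quadratic in t given by H*(t,w) = (8w-2)t² + (4w² - 5w + 4)t + (-2w² + 8w) has exactly one root τ(w) in [0, 1/2], given by τ(w) = (-4w² + 5w - 4 + √((4w² + 19w + 4)(4w² - 13w + 4)))/(4(4w - 1)). Moreover H*(t,w) < 0 for 0 ≤ t < τ(w) and H*(t,w) > 0 for t > τ(w), and τ(w) = 0 if and only if w = 4. -/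
/-!
H*(·, w) is a quadratic `a t² + b t + c` with `a, b > 0` and `c = 2w(4 - w) ≤ 0`, so its larger
root `τ` is nonnegative. Factoring `a t² + b t + c = (t - τ) (a (t + τ) + b)`, the second factor is
positive for `t ≥ 0`, so on `[0, ∞)` the sign of H* is that of `t - τ`. This gives uniqueness of
the root and the sign pattern, and `τ ≤ 1/2` because `H*(1/2, w) = (15 w + 3) / 2 > 0`.
Finally `τ = 0` exactly when `c = 0`, i.e. when `w = 4`.
-/

noncomputable def quadRoot (a b c : ℝ) : ℝ := (-b + √(discrim a b c)) / (2 * a)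

section QuadraticSign

variable {a b c r t : ℝ}

theorem quadratic_eq_mul_of_root (hr : a * r ^ 2 + b * r + c = 0) :
    a * t ^ 2 + b * t + c = (t - r) * (a * (t + r) + b) := by
  linear_combination hr

theorem quadratic_neg_of_lt_root (ha : 0 < a) (hb : 0 < b) (hr : a * r ^ 2 + b * r + c = 0)
    (ht : 0 ≤ t) (htr : t < r) : a * t ^ 2 + b * t + c < 0 := by
  rw [quadratic_eq_mul_of_root hr]
  exact mul_neg_of_neg_of_pos (by linarith) (by nlinarith)

theorem quadratic_pos_of_root_lt (ha : 0 < a) (hb : 0 < b) (hr : a * r ^ 2 + b * r + c = 0)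
    (hr0 : 0 ≤ r) (hrt : r < t) : 0 < a * t ^ 2 + b * t + c := by
  rw [quadratic_eq_mul_of_root hr]
  exact mul_pos (by linarith) (by nlinarith)

theorem eq_root_of_quadratic_eq_zero (ha : 0 < a) (hb : 0 < b) (hr : a * r ^ 2 + b * r + c = 0)
    (hr0 : 0 ≤ r) (ht : 0 ≤ t) (h : a * t ^ 2 + b * t + c = 0) : t = r := by
  rcases lt_trichotomy t r with htr | htr | hrt
  · exact absurd h (quadratic_neg_of_lt_root ha hb hr ht htr).ne
  · exact htr
  · exact absurd h (quadratic_pos_of_root_lt ha hb hr hr0 hrt).ne'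

theorem root_le_of_quadratic_nonneg (ha : 0 < a) (hb : 0 < b) (hr : a * r ^ 2 + b * r + c = 0)
    (ht : 0 ≤ t) (h : 0 ≤ a * t ^ 2 + b * t + c) : r ≤ t :=
  le_of_not_gt fun htr => (quadratic_neg_of_lt_root ha hb hr ht htr).not_ge h

end QuadraticSign

section QuadRoot

variable {a b c : ℝ}

theorem quadRoot_isRoot (ha : a ≠ 0) (hd : 0 ≤ discrim a b c) :
    a * quadRoot a b c ^ 2 + b * quadRoot a b c + c = 0 := by
  rw [sq, quadratic_eq_zero_iff ha (Real.mul_self_sqrt hd).symm]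
  exact Or.inl rfl

theorem discrim_nonneg_of_nonpos (ha : 0 ≤ a) (hc : c ≤ 0) : 0 ≤ discrim a b c := by
  unfold discrim
  nlinarith [sq_nonneg b]

theorem quadRoot_nonneg (ha : 0 < a) (hc : c ≤ 0) : 0 ≤ quadRoot a b c := by
  have hb : b ≤ √(discrim a b c) :=
    (le_abs_self b).trans (Real.abs_le_sqrt (by unfold discrim; nlinarith))
  exact div_nonneg (by linarith) (by linarith)

theorem quadRoot_eq_zero_iff (ha : 0 < a) (hb : 0 < b) (hc : c ≤ 0) :
    quadRoot a b c = 0 ↔ c = 0 := by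
  constructor
  · intro h
    simpa [h] using quadRoot_isRoot ha.ne' (discrim_nonneg_of_nonpos (b := b) ha.le hc)
  · rintro rfl
    simp [quadRoot, discrim, Real.sqrt_sq hb.le]

end QuadRoot

theorem stmt_16_general (w : ℝ) (hw1 : 4 ≤ w)
    (H : ℝ → ℝ → ℝ)
    (hH : ∀ t w, H t w = 8*w*t^2 - 2*t^2 + 4*w^2*t - 5*w*t + 4*t + 8*w - 2*w^2)
    (τ : ℝ)
    (hτ : τ = (-4*w^2 + 5*w - 4 +
        Real.sqrt ((4*w^2 + 19*w + 4)*(4*w^2 - 13*w + 4))) / (4*(4*w - 1))) :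
    τ ∈ Set.Icc (0:ℝ) (1/2) ∧ H τ w = 0 ∧
    (∀ t ∈ Set.Icc (0:ℝ) (1/2), H t w = 0 → t = τ) ∧
    (∀ t, 0 ≤ t → t < τ → H t w < 0) ∧
    (∀ t, τ < t → 0 < H t w) ∧
    (τ = 0 ↔ w = 4) := by
  have ha : 0 < 8*w - 2 := by linarith
  have hb : 0 < 4*w^2 - 5*w + 4 := by nlinarith
  have hc : 8*w - 2*w^2 ≤ 0 := by nlinarith
  have hHq : ∀ t, H t w = (8*w - 2) * t^2 + (4*w^2 - 5*w + 4) * t + (8*w - 2*w^2) :=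
    fun t => by rw [hH]; ring
  have hτq : τ = quadRoot (8*w - 2) (4*w^2 - 5*w + 4) (8*w - 2*w^2) := by
    rw [hτ, quadRoot, discrim]
    ring_nf
  have hroot := quadRoot_isRoot ha.ne' (discrim_nonneg_of_nonpos (b := 4*w^2 - 5*w + 4) ha.le hc)
  have hτ0 := quadRoot_nonneg (b := 4*w^2 - 5*w + 4) ha hc
  rw [← hτq] at hroot hτ0
  simp only [hHq]
  refine ⟨⟨hτ0, root_le_of_quadratic_nonneg ha hb hroot (by norm_num) (by nlinarith)⟩, hroot,
    fun t ht => eq_root_of_quadratic_eq_zero ha hb hroot hτ0 ht.1,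
    fun t => quadratic_neg_of_lt_root ha hb hroot, fun t => quadratic_pos_of_root_lt ha hb hroot hτ0,
    ?_⟩
  rw [hτq, quadRoot_eq_zero_iff ha hb hc]
  constructor
  · intro h
    nlinarith
  · rintro rfl
    norm_num

theorem stmt_16 (w : ℝ) (hw1 : 4 ≤ w) (hw2 : w ≤ 6.71)
    (H : ℝ → ℝ → ℝ)
    (hH : ∀ t w, H t w = 8*w*t^2 - 2*t^2 + 4*w^2*t - 5*w*t + 4*t + 8*w - 2*w^2)
    (τ : ℝ)
    (hτ : τ = (-4*w^2 + 5*w - 4 +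
        Real.sqrt ((4*w^2 + 19*w + 4)*(4*w^2 - 13*w + 4))) / (4*(4*w - 1))) :
    τ ∈ Set.Icc (0:ℝ) (1/2) ∧ H τ w = 0 ∧
    (∀ t ∈ Set.Icc (0:ℝ) (1/2), H t w = 0 → t = τ) ∧
    (∀ t, 0 ≤ t → t < τ → H t w < 0) ∧
    (∀ t, τ < t → 0 < H t w) ∧
    (τ = 0 ↔ w = 4) :=
  stmt_16_general w hw1 H hH τ hτ
end

section
/- Let d ≥ 1 and let P be a monic real polynomial of degree d with no vanishing coefficients. Let c be the number of sign changes and p the number of sign preservations in the sequence of its coefficients (so c + p = d). Let pos be the number of positive real roots and neg the number of negative real roots of P, each counted with multiplicity. Then pos ≤ c, pos ≡ c (mod 2), neg ≤ p, and neg ≡ p (mod 2). -/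
/-!
Mathlib's `Polynomial.roots_countP_pos_le_signVariations` gives the bound, once its
`signVariations` is identified with the count of adjacent coefficient pairs of opposite sign.
For the parity, both `(-1) ^ c` and `(-1) ^ pos` equal the sign of `a₀ a_d`: the first by
walking along the coefficients, the second by splitting off one positive root `η` at a time
(which flips the sign of `P(0)` and keeps the leading coefficient), and, when no positive root
is left, by the intermediate value theorem on `[0, ∞)`. Negative roots of `P` are the positive
roots of `P(-X)`, whose adjacent coefficient products are those of `P` negated.
-/

open Polynomial Finset Filter

section OrderedRing

variable {R : Type*} [Ring R] [LinearOrder R] [IsStrictOrderedRing R]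

theorem sign_eq_neg_sign_iff_mul_neg {a b : R} (ha : a ≠ 0) (hb : b ≠ 0) :
    SignType.sign a = -SignType.sign b ↔ a * b < 0 := by
  rcases ha.lt_or_gt with ha | ha <;> rcases hb.lt_or_gt with hb | hb <;>
    simp [ha, hb, mul_neg_iff, ha.not_gt, hb.not_gt]

theorem sign_mul_eq_pow_card_filter_mul_neg {g : ℕ → R} : ∀ {d : ℕ}, (∀ j ≤ d, g j ≠ 0) →
    SignType.sign (g 0 * g d) = (-1) ^ #{j ∈ range d | g (j + 1) * g j < 0}
  | 0, h => by simpa using sign_pos (mul_self_pos.2 (h 0 le_rfl))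
  | d + 1, h => by
    have ih := sign_mul_eq_pow_card_filter_mul_neg (d := d) fun j hj => h j (by omega)
    have hd : SignType.sign (g d) * SignType.sign (g d) = 1 := by
      rcases (h d (by omega)).lt_or_gt with hlt | hgt <;> simp [*]
    have key : SignType.sign (g 0 * g (d + 1)) =
        SignType.sign (g 0 * g d) * SignType.sign (g (d + 1) * g d) := by
      rw [sign_mul, sign_mul, sign_mul, mul_mul_mul_comm, hd, mul_one]
    rw [key, ih, range_add_one, filter_insert]
    split_ifs with hneg
    · rw [card_insert_of_notMem (by simp), pow_succ, sign_neg hneg]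
    · have hpos : 0 < g (d + 1) * g d :=
        (not_lt.1 hneg).lt_of_ne (mul_ne_zero (h _ le_rfl) (h d (by omega))).symm
      rw [sign_pos hpos, mul_one]

theorem signVariations_eq_card_filter_mul_neg {P : R[X]}
    (hP : ∀ j ≤ P.natDegree, P.coeff j ≠ 0) :
    P.signVariations = #{j ∈ range P.natDegree | P.coeff (j + 1) * P.coeff j < 0} := by
  obtain ⟨n, hn⟩ : ∃ n, P.natDegree = n := ⟨_, rfl⟩
  induction n generalizing P with
  | zero =>
    rw [hn, range_zero, filter_empty, card_empty, eq_C_of_natDegree_eq_zero hn,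
      ← monomial_zero_left, signVariations_monomial]
  | succ n ih =>
    have hP0 : P ≠ 0 := fun h => hP 0 (by omega) (by simp [h])
    have hnext : P.nextCoeff = P.coeff n := by
      rw [nextCoeff_of_natDegree_pos (by omega), hn]; rfl
    have hnext0 : P.nextCoeff ≠ 0 := hnext ▸ hP n (by omega)
    have hE : P.eraseLead.natDegree = n := by rw [natDegree_eraseLead hnext0, hn]; rfl
    have hEcoeff : ∀ j ≤ n, P.eraseLead.coeff j = P.coeff j := fun j hj =>
      eraseLead_coeff_of_ne j (by omega)
    have hfilter : {j ∈ range n | P.eraseLead.coeff (j + 1) * P.eraseLead.coeff j < 0} =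
        {j ∈ range n | P.coeff (j + 1) * P.coeff j < 0} :=
      filter_congr fun j hj => by
        rw [mem_range] at hj
        rw [hEcoeff j hj.le, hEcoeff (j + 1) hj]
    rw [signVariations_eq_eraseLead_add_ite hP0, leadingCoeff_eraseLead_eq_nextCoeff hnext0,
      ih (fun j hj => hEcoeff j (by omega) ▸ hP j (by omega)) hE, hE, hfilter, hn,
      range_add_one, filter_insert, hnext, leadingCoeff, hn]
    simp only [sign_eq_neg_sign_iff_mul_neg (hP _ hn.ge) (hP n (by omega))]
    split_ifs <;> simp

end OrderedRing

theorem coeff_comp_neg_X {R : Type*} [Ring R] (P : R[X]) (n : ℕ) :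
    (P.comp (-X)).coeff n = P.coeff n * (-1) ^ n := by
  simpa using comp_C_mul_X_coeff (p := P) (r := -1) (n := n)

theorem natDegree_comp_neg_X {R : Type*} [Ring R] (P : R[X]) :
    (P.comp (-X)).natDegree = P.natDegree :=
  natDegree_eq_of_degree_eq degree_comp_neg_X

theorem mod_two_eq_of_neg_one_pow_eq {M : Type*} [Monoid M] [HasDistribNeg M] (h1 : (-1 : M) ≠ 1)
    {m n : ℕ} (h : (-1 : M) ^ m = (-1) ^ n) : m % 2 = n % 2 := by
  have := (neg_one_pow_eq_one_iff_even h1).symm.trans (h ▸ neg_one_pow_eq_one_iff_even h1)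
  simp only [Nat.even_iff] at this
  omega

theorem eval_zero_mul_leadingCoeff_pos {P : ℝ[X]} (h0 : P.eval 0 ≠ 0)
    (hroots : ∀ x, 0 < x → ¬P.IsRoot x) : 0 < P.eval 0 * P.leadingCoeff := by
  have hlc : P.leadingCoeff ≠ 0 := leadingCoeff_ne_zero.2 fun h => h0 (by simp [h])
  by_contra! hle
  rcases Nat.eq_zero_or_pos P.natDegree with hd | hd
  · rw [leadingCoeff, hd] at hle hlc
    rw [← coeff_zero_eq_eval_zero] at hle
    exact hlc (mul_self_eq_zero.1 (le_antisymm hle (mul_self_nonneg _)))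
  set Q := C P.leadingCoeff * P
  have hQ0 : Q.eval 0 < 0 := by
    simp only [Q, eval_mul, eval_C]
    exact lt_of_le_of_ne (by linarith) (mul_ne_zero hlc h0)
  have htop : Tendsto Q.eval atTop atTop :=
    Q.tendsto_atTop_of_leadingCoeff_nonneg
      (by rwa [degree_C_mul hlc, ← natDegree_pos_iff_degree_pos])
      (by simpa [Q] using mul_self_nonneg _)
  obtain ⟨y, hy0, hy⟩ := ((eventually_gt_atTop 0).and (htop.eventually_gt_atTop 0)).exists
  obtain ⟨z, hz, hQz⟩ := intermediate_value_Icc hy0.le Q.continuousOn ⟨hQ0.le, hy.le⟩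
  have hz0 : 0 < z := lt_of_le_of_ne hz.1 (by rintro rfl; exact hQ0.ne hQz)
  exact hroots z hz0 (by simpa [Q, hlc] using hQz)

theorem sign_eval_zero_mul_leadingCoeff {P : ℝ[X]} (h0 : P.eval 0 ≠ 0) :
    SignType.sign (P.eval 0 * P.leadingCoeff) = (-1) ^ P.roots.countP (0 < ·) := by
  generalize hn : P.roots.countP (0 < ·) = n
  induction n generalizing P with
  | zero =>
    refine (sign_pos (eval_zero_mul_leadingCoeff_pos h0 fun x hx hroot => ?_)).trans
      (pow_zero _).symm
    have : 0 < P.roots.countP (0 < ·) :=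
      Multiset.countP_pos.2 ⟨x, (mem_roots (fun h => h0 (by simp [h]))).2 hroot, hx⟩
    omega
  | succ n ih =>
    have hP0 : P ≠ 0 := fun h => h0 (by simp [h])
    obtain ⟨η, hη, hηpos⟩ : ∃ x ∈ P.roots, 0 < x :=
      Multiset.countP_pos.1 (by rw [hn]; exact n.succ_pos)
    obtain ⟨Q, rfl⟩ := dvd_iff_isRoot.2 (isRoot_of_mem_roots hη)
    have hQ0 : Q.eval 0 ≠ 0 := by simp at h0; exact h0.2
    have hQn : Q.roots.countP (0 < ·) = n := by
      simpa [roots_mul hP0, hηpos] using hn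
    rw [pow_succ, ← ih hQ0 hQn, eval_mul, leadingCoeff_mul, leadingCoeff_X_sub_C, one_mul,
      eval_sub, eval_X, eval_C, zero_sub, neg_mul, neg_mul, Left.sign_neg, mul_assoc, sign_mul,
      sign_pos hηpos, one_mul, mul_neg_one]

theorem card_filter_pos_roots_le_and_mod_two_eq {P : ℝ[X]}
    (hP : ∀ j ≤ P.natDegree, P.coeff j ≠ 0) :
    (P.roots.filter (0 < ·)).card ≤ #{j ∈ range P.natDegree | P.coeff (j + 1) * P.coeff j < 0} ∧
      (P.roots.filter (0 < ·)).card % 2 =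
        #{j ∈ range P.natDegree | P.coeff (j + 1) * P.coeff j < 0} % 2 := by
  rw [← Multiset.countP_eq_card_filter, ← signVariations_eq_card_filter_mul_neg hP]
  refine ⟨roots_countP_pos_le_signVariations P, mod_two_eq_of_neg_one_pow_eq (M := SignType) (by decide) ?_⟩
  have h0 : P.eval 0 ≠ 0 := coeff_zero_eq_eval_zero P ▸ hP 0 (Nat.zero_le _)
  rw [← sign_eval_zero_mul_leadingCoeff h0, signVariations_eq_card_filter_mul_neg hP,
    ← sign_mul_eq_pow_card_filter_mul_neg hP, ← coeff_zero_eq_eval_zero, leadingCoeff]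

theorem card_filter_neg_roots_le_and_mod_two_eq {P : ℝ[X]}
    (hP : ∀ j ≤ P.natDegree, P.coeff j ≠ 0) :
    (P.roots.filter (· < 0)).card ≤ #{j ∈ range P.natDegree | 0 < P.coeff (j + 1) * P.coeff j} ∧
      (P.roots.filter (· < 0)).card % 2 =
        #{j ∈ range P.natDegree | 0 < P.coeff (j + 1) * P.coeff j} % 2 := by
  have hQ : ∀ j ≤ (P.comp (-X)).natDegree, (P.comp (-X)).coeff j ≠ 0 := fun j hj => by
    rw [coeff_comp_neg_X]
    exact mul_ne_zero (hP j (natDegree_comp_neg_X P ▸ hj)) (pow_ne_zero _ (by norm_num))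
  have hroots : ((P.comp (-X)).roots.filter (0 < ·)).card = (P.roots.filter (· < 0)).card := by
    simp [roots_comp_neg_X, Multiset.filter_map]
  have hchanges : ∀ j, (P.comp (-X)).coeff (j + 1) * (P.comp (-X)).coeff j < 0 ↔
      0 < P.coeff (j + 1) * P.coeff j := fun j => by
    have hsign : ((-1 : ℝ) ^ (j + 1)) * (-1) ^ j = -1 := by
      rw [← pow_add]; exact Odd.neg_one_pow ⟨j, by ring⟩
    rw [coeff_comp_neg_X, coeff_comp_neg_X, mul_mul_mul_comm, hsign, mul_neg_one, neg_lt_zero]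
  rw [← hroots]
  simpa only [natDegree_comp_neg_X, hchanges] using card_filter_pos_roots_le_and_mod_two_eq hQ

theorem stmt_17_general (d : ℕ) (P : Polynomial ℝ)
    (hdeg : P.natDegree = d)
    (hnz : ∀ j, j ≤ d → P.coeff j ≠ 0)
    (c p pos neg : ℕ)
    (hc : c = ((Finset.range d).filter (fun j => P.coeff (j+1) * P.coeff j < 0)).card)
    (hp : p = ((Finset.range d).filter (fun j => 0 < P.coeff (j+1) * P.coeff j)).card)
    (hpos : pos = (P.roots.filter (fun x => 0 < x)).card)
    (hneg : neg = (P.roots.filter (fun x => x < 0)).card) :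
    pos ≤ c ∧ pos % 2 = c % 2 ∧ neg ≤ p ∧ neg % 2 = p % 2 := by
  subst hc hp hpos hneg hdeg
  exact ⟨(card_filter_pos_roots_le_and_mod_two_eq hnz).1,
    (card_filter_pos_roots_le_and_mod_two_eq hnz).2,
    (card_filter_neg_roots_le_and_mod_two_eq hnz).1,
    (card_filter_neg_roots_le_and_mod_two_eq hnz).2⟩

theorem stmt_17 (d : ℕ) (hd : 1 ≤ d) (P : Polynomial ℝ)
    (hmonic : P.Monic) (hdeg : P.natDegree = d)
    (hnz : ∀ j, j ≤ d → P.coeff j ≠ 0)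
    (c p pos neg : ℕ)
    (hc : c = ((Finset.range d).filter (fun j => P.coeff (j+1) * P.coeff j < 0)).card)
    (hp : p = ((Finset.range d).filter (fun j => 0 < P.coeff (j+1) * P.coeff j)).card)
    (hpos : pos = (P.roots.filter (fun x => 0 < x)).card)
    (hneg : neg = (P.roots.filter (fun x => x < 0)).card) :
    pos ≤ c ∧ pos % 2 = c % 2 ∧ neg ≤ p ∧ neg % 2 = p % 2 :=
  stmt_17_general d P hdeg hnz c p pos neg hc hp hpos hneg
end
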